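/- arXiv:2205.04578 — 2 statements merged into one kernel-verified Lean document; each statement's English description precedes it below -/
import Mathlib

section
/- The mean of the Rician Shadowed power distribution with PDF f(x) = (m/(m+K))^m ((1+K)/γ̄) e^{-(1+K)x/γ̄} ₁F₁(m;1; K(1+K)x/(γ̄(m+K))) equals γ̄, i.e. ∫₀^∞ x f(x) dx = γ̄, for m > 0, K ≥ 0, γ̄ > 0. -/
open Real MeasureTheory Set

noncomputable def poch (a : ℝ) (n : ℕ) : ℝ := (ascPochhammer ℝ n).eval a

/-- Confluent hypergeometric function of the first kind (series). -/
noncomputable def hyp1F1 (a c z : ℝ) : ℝ :=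
  ∑' k : ℕ, poch a k / (poch c k * (k.factorial : ℝ)) * z ^ k

/-! Write `b = (1 + K) / γbar` and `s = K / (m + K)`. Expanding `₁F₁(m; 1; b s x)` and integrating
term by term, `∫ x^(k+1) e^(-b x) = (k+1)! / b^(k+2)` turns the mean into `(m/(m+K))^m / b` times
`∑ (k+1) (m)_k / k! s^k = (1-s)^(-m) + m s (1-s)^(-(m+1))`, a binomial series. Since `1 - s = m/(m+K)`,
the prefactor cancels the powers of `1 - s` and leaves `(1 + K) / b = γbar`. -/

open scoped Nat

theorem poch_succ_right (a : ℝ) (k : ℕ) : poch a (k + 1) = poch a k * (a + k) := by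
  simp [poch, ascPochhammer_succ_right]

theorem poch_succ_left (a : ℝ) (k : ℕ) : poch a (k + 1) = a * poch (a + 1) k := by
  simp [poch, ascPochhammer_succ_left, Polynomial.eval_comp]

theorem poch_one (k : ℕ) : poch 1 k = k ! := ascPochhammer_eval_one ℝ k

theorem poch_nonneg {a : ℝ} (ha : 0 ≤ a) (k : ℕ) : 0 ≤ poch a k := by
  induction k with
  | zero => simp [poch]
  | succ k ih => rw [poch_succ_right]; positivity

theorem poch_div_factorial_eq_choose (a : ℝ) (k : ℕ) :
    poch a k / k ! = Ring.choose (a + k - 1) k := by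
  rw [← Ring.multichoose_eq, div_eq_iff (by positivity), mul_comm, ← nsmul_eq_mul,
    Ring.factorial_nsmul_multichoose_eq_ascPochhammer, Polynomial.ascPochhammer_smeval_eq_eval, poch]

theorem hasSum_poch_div_factorial_mul_pow (a : ℝ) {s : ℝ} (hs : |s| < 1) :
    HasSum (fun k ↦ poch a k / k ! * s ^ k) ((1 - s) ^ (-a)) := by
  have := (one_div_one_sub_rpow_hasFPowerSeriesOnBall_zero a).hasSum
    (y := s) (by simpa [enorm_eq_nnnorm, ← NNReal.coe_lt_one] using hs)
  simp only [FormalMultilinearSeries.ofScalars_apply_eq, zero_add, smul_eq_mul] at this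
  rw [rpow_neg (by linarith [le_abs_self s]), ← one_div]
  simpa only [poch_div_factorial_eq_choose] using this

theorem hasSum_succ_mul_poch_div_factorial_mul_pow (a : ℝ) {s : ℝ} (hs : |s| < 1) :
    HasSum (fun k ↦ (k + 1) * poch a k / k ! * s ^ k)
      ((1 - s) ^ (-a) + a * s * (1 - s) ^ (-(a + 1))) := by
  have hshift : HasSum (fun k : ℕ ↦ (k + 1 : ℕ) * poch a (k + 1) / (k + 1)! * s ^ (k + 1))
      (a * s * (1 - s) ^ (-(a + 1))) := by
    refine ((hasSum_poch_div_factorial_mul_pow (a + 1) hs).mul_left (a * s)).congr_fun fun k ↦ ?_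
    rw [poch_succ_left, Nat.factorial_succ, pow_succ]
    push_cast
    field_simp
  have hweighted : HasSum (fun k : ℕ ↦ k * poch a k / k ! * s ^ k) (a * s * (1 - s) ^ (-(a + 1))) :=
    (hasSum_nat_add_iff' 1).mp (by simpa using hshift)
  convert (hasSum_poch_div_factorial_mul_pow a hs).add hweighted using 1
  funext k
  ring

theorem integral_pow_mul_exp_neg_mul_Ioi (n : ℕ) {b : ℝ} (hb : 0 < b) :
    ∫ x in Ioi (0 : ℝ), x ^ n * exp (-(b * x)) = n ! / b ^ (n + 1) := by
  have h := integral_rpow_mul_exp_neg_mul_Ioi (a := n + 1) (by positivity) hb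
  simp only [add_sub_cancel_right, rpow_natCast, Gamma_nat_eq_factorial] at h
  rw [h]
  norm_cast
  rw [div_pow, one_pow]
  field_simp

theorem integrableOn_pow_mul_exp_neg_mul_Ioi (n : ℕ) {b : ℝ} (hb : 0 < b) :
    IntegrableOn (fun x ↦ x ^ n * exp (-(b * x))) (Ioi 0) :=
  Integrable.of_integral_ne_zero (by rw [integral_pow_mul_exp_neg_mul_Ioi n hb]; positivity)

theorem integral_mul_exp_neg_mul_mul_hyp1F1_one {a b s : ℝ} (ha : 0 ≤ a) (hb : 0 < b)
    (hs₀ : 0 ≤ s) (hs₁ : s < 1) :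
    ∫ x in Ioi (0 : ℝ), x * exp (-(b * x)) * hyp1F1 a 1 (b * s * x)
      = ((1 - s) ^ (-a) + a * s * (1 - s) ^ (-(a + 1))) / b ^ 2 := by
  set F : ℕ → ℝ → ℝ := fun k x ↦ poch a k / k ! ^ 2 * (b * s) ^ k * (x ^ (k + 1) * exp (-(b * x)))
  have hF_expansion : ∀ x, x * exp (-(b * x)) * hyp1F1 a 1 (b * s * x) = ∑' k, F k x := by
    intro x
    rw [hyp1F1, ← tsum_mul_left]
    congr 1 with k
    rw [poch_one]
    ring
  have hF_nonneg : ∀ k, ∀ x ∈ Ioi (0 : ℝ), 0 ≤ F k x := fun k x (hx : 0 < x) ↦ by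
    have := poch_nonneg ha k
    positivity
  have hF_integrable : ∀ k, IntegrableOn (F k) (Ioi 0) := fun k ↦
    (integrableOn_pow_mul_exp_neg_mul_Ioi (k + 1) hb).const_mul _
  have hF_integral : ∀ k, ∫ x in Ioi (0 : ℝ), F k x = (k + 1) * poch a k / k ! * s ^ k / b ^ 2 := by
    intro k
    rw [integral_const_mul, integral_pow_mul_exp_neg_mul_Ioi _ hb, Nat.factorial_succ]
    push_cast
    field_simp
    ring
  have hsum : HasSum (fun k ↦ ∫ x in Ioi (0 : ℝ), F k x)
      (((1 - s) ^ (-a) + a * s * (1 - s) ^ (-(a + 1))) / b ^ 2) := by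
    simpa only [hF_integral] using (hasSum_succ_mul_poch_div_factorial_mul_pow a
      (abs_lt.2 ⟨by linarith, hs₁⟩)).div_const (b ^ 2)
  have hnorm_summable : Summable fun k ↦ ∫ x in Ioi (0 : ℝ), ‖F k x‖ := by
    refine hsum.summable.congr fun k ↦ setIntegral_congr_fun measurableSet_Ioi fun x hx ↦ ?_
    exact (Real.norm_of_nonneg (hF_nonneg k x hx)).symm
  simp only [hF_expansion]
  exact (hasSum_integral_of_summable_integral_norm hF_integrable hnorm_summable).unique hsum

/-- The mean of the Rician Shadowed power distribution equals `γbar`. -/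
theorem stmt_5 (m K γbar : ℝ) (hm : 0 < m) (hK : 0 ≤ K) (hγ : 0 < γbar) :
    (∫ x in Ioi (0:ℝ),
        x * ((m / (m + K)) ^ m * ((1 + K) / γbar) * Real.exp (-(1 + K) * x / γbar) *
          hyp1F1 m 1 (K * (1 + K) * x / (γbar * (m + K))))) = γbar := by
  set b := (1 + K) / γbar with hb_def
  set q := m / (m + K) with hq_def
  have hb : 0 < b := by positivity
  have hq : 0 < q := by positivity
  have hs : 1 - K / (m + K) = q := by rw [hq_def]; field_simp; ring
  have hintegrand : ∀ x : ℝ, x * (q ^ m * b * exp (-(1 + K) * x / γbar) *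
      hyp1F1 m 1 (K * (1 + K) * x / (γbar * (m + K))))
        = q ^ m * b * (x * exp (-(b * x)) * hyp1F1 m 1 (b * (K / (m + K)) * x)) := by
    intro x
    rw [hb_def]
    field_simp
  simp only [hintegrand]
  rw [integral_const_mul, integral_mul_exp_neg_mul_mul_hyp1F1_one hm.le hb (by positivity)
    ((div_lt_one (by positivity)).2 (by linarith)), hs]
  have hq_cancel : q ^ m * q ^ (-m) = 1 := by rw [← rpow_add hq]; simp
  have hq_shift : q ^ m * q ^ (-(m + 1)) = q⁻¹ := by
    rw [← rpow_add hq, show m + -(m + 1) = -1 by ring, rpow_neg_one]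
  calc q ^ m * b * ((q ^ (-m) + m * (K / (m + K)) * q ^ (-(m + 1))) / b ^ 2)
      = (q ^ m * q ^ (-m) + m * (K / (m + K)) * (q ^ m * q ^ (-(m + 1)))) / b := by
        field_simp
    _ = γbar := by
        rw [hq_cancel, hq_shift, hq_def, hb_def]
        field_simp
end

section
/- Fix m > 0, K ≥ 0, Δ ∈ [0,1], γ̄ > 0, s ≤ 0, and a natural number n. Then (1/π)∫₀^π M^{(n)}_{γ|θ}(s) dθ, with conditional GMGF M^{(n)}_{γ|θ}(s) = n! m^m (1+K-γ̄s)^{m-n-1} γ̄^n Σ_{l=0}^n C(n,l) ((m)_l/l!) (1+K)^{l+1} K^l (1+Δcos θ)^l / [m(1+K) - (m+K+KΔcos θ)γ̄s]^{l+m}, equals n! m^m (1+K-γ̄s)^{m-n-1} γ̄^n Σ_{l=0}^n C(n,l) ((m)_l/l!) (1+K)^{l+1} K^l / [m(1+K)-(m+K-KΔ)γ̄s]^{m+l} · Σ_{q=0}^l C(l,q) (1-Δ)^{l-q} (2Δ)^q (Γ(q+1/2)/(√π Γ(q+1))) ₂F₁(m+l, q+1/2; q+1; 2KΔγ̄s/(m(1+K)-(m+K-KΔ)γ̄s)).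 -/
/-!
Write the denominator of the conditional GMGF as `D + c cos θ` with `D = m(1+K) - (m+K)γ̄s`
and `c = -KΔγ̄s`, so that `0 ≤ c < D`. The binomial expansion
`(1 + Δ cos θ)^l = Σ_q C(l,q) (1-Δ)^(l-q) Δ^q (1 + cos θ)^q` reduces the average over `θ`
to the averages of `(1 + cos θ)^q / (D + c cos θ)^a`. The substitution `cos θ = 2t - 1`
turns `dθ` into `t^(-1/2) (1-t)^(-1/2) dt` and `D + c cos θ` into `(D - c)(1 - t z)` with
`z = -2c/(D - c)`, which is Euler's integral for `₂F₁(a, q + 1/2; q + 1; z)`; with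
`Γ(1/2) = √π` the Gamma factors leave exactly `1/π`.
-/

open Real MeasureTheory Set

/-- Gauss hypergeometric function via Euler's integral representation. -/
noncomputable def hyp2F1 (a b c z : ℝ) : ℝ :=
  (Real.Gamma c / (Real.Gamma b * Real.Gamma (c - b))) *
    ∫ t in (0:ℝ)..1, t ^ (b - 1) * (1 - t) ^ (c - b - 1) * (1 - t * z) ^ (-a)

theorem integral_comp_cos_zero_pi (f : ℝ → ℝ) :
    ∫ θ in (0:ℝ)..π, f (cos θ) =
      ∫ t in (0:ℝ)..1, t ^ (-(1/2) : ℝ) * (1 - t) ^ (-(1/2) : ℝ) * f (2 * t - 1) := by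
  have hsubst := intervalIntegral.integral_deriv_smul_comp_of_deriv_nonpos (a := 0) (b := 1)
    (f := fun t => arccos (2 * t - 1))
    (f' := fun t => -(t ^ (-(1/2) : ℝ) * (1 - t) ^ (-(1/2) : ℝ)))
    (g := fun θ => f (cos θ)) (by fun_prop) ?_ ?_
  · simp only [Function.comp_apply, smul_eq_mul, mul_zero, zero_sub, arccos_neg_one,
      mul_one, show (2:ℝ) - 1 = 1 by norm_num, arccos_one] at hsubst
    rw [intervalIntegral.integral_symm, ← hsubst, ← intervalIntegral.integral_neg]
    refine intervalIntegral.integral_congr fun t ht => ?_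
    rw [uIcc_of_le zero_le_one] at ht
    rw [cos_arccos (x := 2 * t - 1) (by linarith [ht.1]) (by linarith [ht.2])]
    ring
  · intro t ht
    simp only [min_eq_left zero_le_one, max_eq_right zero_le_one, mem_Ioo] at ht
    have hroot : sqrt (1 - (2 * t - 1) ^ 2) = 2 * (t * (1 - t)) ^ (1/2 : ℝ) := by
      rw [← sqrt_eq_rpow, show 1 - (2 * t - 1) ^ 2 = 2 ^ 2 * (t * (1 - t)) by ring,
        sqrt_mul (by norm_num), sqrt_sq zero_le_two]
    have hlin : HasDerivAt (fun t : ℝ => 2 * t - 1) 2 t := by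
      simpa using ((hasDerivAt_id t).const_mul 2).sub_const 1
    have := (hasDerivAt_arccos (x := 2 * t - 1) (by linarith) (by linarith)).comp t hlin
    refine this.congr_deriv ?_
    have hpos : 0 < t * (1 - t) := mul_pos ht.1 (by linarith)
    rw [hroot, ← mul_rpow ht.1.le (by linarith), rpow_neg hpos.le]
    have := rpow_pos_of_pos hpos (1/2)
    field_simp
  · intro t ht
    simp only [min_eq_left zero_le_one, max_eq_right zero_le_one, mem_Ioo] at ht
    exact neg_nonpos.2 (mul_nonneg (rpow_nonneg ht.1.le _) (rpow_nonneg (sub_nonneg.2 ht.2.le) _))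

theorem one_add_mul_pow_eq_sum {R : Type*} [CommRing R] (Δ x : R) (l : ℕ) :
    (1 + Δ * x) ^ l = ∑ q ∈ Finset.range (l + 1),
      (l.choose q : R) * (1 - Δ) ^ (l - q) * Δ ^ q * (1 + x) ^ q := by
  rw [show 1 + Δ * x = Δ * (1 + x) + (1 - Δ) by ring, add_pow]
  exact Finset.sum_congr rfl fun q _ => by rw [mul_pow]; ring

section CosineAverages

variable {c D : ℝ}

lemma add_mul_pos_of_abs_le_one (hc : |c| < D) {x : ℝ} (hx : |x| ≤ 1) : 0 < D + c * x := by
  have h : |c * x| ≤ |c| := by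
    rw [abs_mul]; exact mul_le_of_le_one_right (abs_nonneg c) hx
  linarith [neg_abs_le (c * x)]

lemma intervalIntegrable_div_add_mul_cos_rpow (hc : |c| < D) {f : ℝ → ℝ} (hf : Continuous f)
    (a x y : ℝ) : IntervalIntegrable (fun θ => f θ / (D + c * cos θ) ^ a) volume x y := by
  have hpos θ : 0 < D + c * cos θ := add_mul_pos_of_abs_le_one hc (abs_cos_le_one θ)
  refine (hf.div ?_ fun θ => (rpow_pos_of_pos (hpos θ) a).ne').intervalIntegrable x y
  exact (continuous_const.add (continuous_const.mul continuous_cos)).rpow_const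
    fun θ => Or.inl (hpos θ).ne'

theorem integral_one_add_cos_pow_div_rpow (hc : |c| < D) (a : ℝ) (q : ℕ) :
    (1 / π) * ∫ θ in (0:ℝ)..π, (1 + cos θ) ^ q / (D + c * cos θ) ^ a
      = 2 ^ q / (D - c) ^ a * (Gamma (q + 1/2) / (sqrt π * Gamma (q + 1))) *
        hyp2F1 a (q + 1/2) (q + 1) (-(2 * c) / (D - c)) := by
  have hDc : 0 < D - c := by linarith [le_abs_self c]
  set z := -(2 * c) / (D - c) with hz
  have hEuler : hyp2F1 a (q + 1/2) (q + 1) z = Gamma (q + 1) / (Gamma (q + 1/2) * sqrt π) *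
      ∫ t in (0:ℝ)..1,
        t ^ (-(1/2) : ℝ) * (1 - t) ^ (-(1/2) : ℝ) * (t ^ q * (1 - t * z) ^ (-a)) := by
    have hq : (q : ℝ) + -(1/2) ≠ 0 := by
      intro h
      have : ((2 * q : ℕ) : ℝ) = 1 := by push_cast; linarith
      norm_cast at this; omega
    rw [hyp2F1, show (q : ℝ) + 1 - (q + 1/2) = 1/2 by ring, Gamma_one_half_eq]
    congr 1
    refine intervalIntegral.integral_congr fun t ht => ?_
    rw [uIcc_of_le zero_le_one] at ht
    rw [show (q : ℝ) + 1/2 - 1 = q + -(1/2) by ring, show (1/2 : ℝ) - 1 = -(1/2) by norm_num,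
      rpow_add' ht.1 hq, rpow_natCast]
    ring
  have hsubst : ∫ θ in (0:ℝ)..π, (1 + cos θ) ^ q / (D + c * cos θ) ^ a
      = 2 ^ q / (D - c) ^ a * ∫ t in (0:ℝ)..1,
          t ^ (-(1/2) : ℝ) * (1 - t) ^ (-(1/2) : ℝ) * (t ^ q * (1 - t * z) ^ (-a)) := by
    rw [integral_comp_cos_zero_pi fun x => (1 + x) ^ q / (D + c * x) ^ a,
      ← intervalIntegral.integral_const_mul]
    refine intervalIntegral.integral_congr fun t ht => ?_
    rw [uIcc_of_le zero_le_one] at ht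
    have hpos : 0 < D + c * (2 * t - 1) :=
      add_mul_pos_of_abs_le_one hc (abs_le.2 ⟨by linarith [ht.1], by linarith [ht.2]⟩)
    have hlin : 1 - t * z = (D + c * (2 * t - 1)) / (D - c) := by
      rw [hz]; field_simp; ring
    rw [hlin, rpow_neg (div_nonneg hpos.le hDc.le), div_rpow hpos.le hDc.le,
      show 1 + (2 * t - 1) = 2 * t by ring, mul_pow]
    have := rpow_pos_of_pos hpos a
    have := rpow_pos_of_pos hDc a
    field_simp
  have hΓ : 0 < Gamma (q + 1/2) := Gamma_pos_of_pos (by positivity)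
  have hΓ' : 0 < Gamma (q + 1) := Gamma_pos_of_pos (by positivity)
  have hconst : Gamma (q + 1/2) / (sqrt π * Gamma (q + 1)) *
      (Gamma (q + 1) / (Gamma (q + 1/2) * sqrt π)) = 1 / π := by
    have := sqrt_pos.2 pi_pos
    field_simp
    exact (sq_sqrt pi_pos.le).symm
  rw [hsubst, hEuler, ← hconst]
  ring

theorem integral_one_add_mul_cos_pow_div_rpow (hc : |c| < D) (a Δ : ℝ) (l : ℕ) :
    (1 / π) * ∫ θ in (0:ℝ)..π, (1 + Δ * cos θ) ^ l / (D + c * cos θ) ^ a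
      = 1 / (D - c) ^ a * ∑ q ∈ Finset.range (l + 1),
          (l.choose q : ℝ) * (1 - Δ) ^ (l - q) * (2 * Δ) ^ q *
            (Gamma (q + 1/2) / (sqrt π * Gamma (q + 1))) *
            hyp2F1 a (q + 1/2) (q + 1) (-(2 * c) / (D - c)) := by
  simp_rw [one_add_mul_pow_eq_sum Δ (cos _) l, Finset.sum_div, mul_div_assoc]
  rw [intervalIntegral.integral_finsetSum fun q _ =>
    (intervalIntegrable_div_add_mul_cos_rpow hc (by fun_prop) a 0 π).const_mul _]
  rw [Finset.mul_sum, Finset.mul_sum]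
  refine Finset.sum_congr rfl fun q _ => ?_
  rw [intervalIntegral.integral_const_mul, mul_left_comm, integral_one_add_cos_pow_div_rpow hc]
  ring

end CosineAverages

/-- Closed-form generalized MGF of the FTR model: averaging the conditional
    Rician Shadowed GMGF over uniform `θ` yields the closed form (9). -/
theorem stmt_11 (m K Δ γbar s : ℝ) (n : ℕ)
    (hm : 0 < m) (hK : 0 ≤ K) (hΔ0 : 0 ≤ Δ) (hΔ1 : Δ ≤ 1) (hγ : 0 < γbar) (hs : s ≤ 0) :
    (1 / π) * (∫ θ in (0:ℝ)..π,
        (n.factorial : ℝ) * m ^ m * (1 + K - γbar * s) ^ (m - (n : ℝ) - 1) * γbar ^ n *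
          ∑ l ∈ Finset.range (n + 1),
            (n.choose l : ℝ) * (poch m l / (l.factorial : ℝ)) *
              (1 + K) ^ (l + 1) * K ^ l * (1 + Δ * Real.cos θ) ^ l /
                (m * (1 + K) - (m + K + K * Δ * Real.cos θ) * γbar * s) ^ ((l : ℝ) + m))
      = (n.factorial : ℝ) * m ^ m * (1 + K - γbar * s) ^ (m - (n : ℝ) - 1) * γbar ^ n *
          ∑ l ∈ Finset.range (n + 1),
            (n.choose l : ℝ) * (poch m l / (l.factorial : ℝ)) *
              ((1 + K) ^ (l + 1) * K ^ l /
                (m * (1 + K) - (m + K - K * Δ) * γbar * s) ^ (m + (l : ℝ))) *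
              ∑ q ∈ Finset.range (l + 1),
                (l.choose q : ℝ) * (1 - Δ) ^ (l - q) * (2 * Δ) ^ q *
                  (Real.Gamma ((q : ℝ) + 1/2) / (Real.sqrt π * Real.Gamma ((q : ℝ) + 1))) *
                  hyp2F1 (m + (l : ℝ)) ((q : ℝ) + 1/2) ((q : ℝ) + 1)
                    (2 * K * Δ * γbar * s /
                      (m * (1 + K) - (m + K - K * Δ) * γbar * s)) := by
  have hγs : γbar * s ≤ 0 := mul_nonpos_of_nonneg_of_nonpos hγ.le hs
  set D := m * (1 + K) - (m + K) * γbar * s with hD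
  set c := -(K * Δ * γbar * s) with hc
  have hcD : |c| < D := by
    have hc0 : 0 ≤ c := by
      rw [hc, show -(K * Δ * γbar * s) = K * Δ * -(γbar * s) by ring]
      exact mul_nonneg (mul_nonneg hK hΔ0) (neg_nonneg.2 hγs)
    have : 0 < D - c := by
      rw [hD, hc]
      nlinarith [mul_pos hm (by linarith : (0:ℝ) < 1 + K), mul_nonneg hK (sub_nonneg.2 hΔ1)]
    rw [abs_of_nonneg hc0]; linarith
  have hden θ : m * (1 + K) - (m + K + K * Δ * cos θ) * γbar * s = D + c * cos θ := by
    rw [hD, hc]; ring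
  have hDc : m * (1 + K) - (m + K - K * Δ) * γbar * s = D - c := by rw [hD, hc]; ring
  have hz : 2 * K * Δ * γbar * s = -(2 * c) := by rw [hc]; ring
  simp_rw [hden, hDc, hz, mul_div_assoc, add_comm (_ : ℝ) m]
  rw [intervalIntegral.integral_const_mul, intervalIntegral.integral_finsetSum fun l _ =>
    (intervalIntegrable_div_add_mul_cos_rpow hcD (by fun_prop) _ 0 π).const_mul _]
  rw [mul_left_comm, Finset.mul_sum]
  congr 1
  refine Finset.sum_congr rfl fun l _ => ?_
  rw [intervalIntegral.integral_const_mul, mul_left_comm, integral_one_add_mul_cos_pow_div_rpow hcD]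
  ring
end
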